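/- Under the change of variables x̃*_{i,m} := x*_{i,m} + (1/4m) ε_{ijk} Σ_{n∈½+ℤ} ψ^j_n ψ^k_{m-n} (for m ≠ 0) and W̃*_i := W*_i - ¼ ε_{ijk} Σ_{n∈½+ℤ} ψ^j_n ψ^k_{-n}, the new bosonic generators x̃*_{i,m}, W̃*_i super-commute with all fermionic generators ψ^j_n, ψ*_{j,n}: [x̃*_{i,m}, ψ*_{j,n}] = 0 and [W̃*_i, ψ*_{j,n}] = 0. -/
import Mathlib


noncomputable section

/-- The totally antisymmetric Levi-Civita tensor on three indices, with `eps 0 1 2 = 1`. -/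
def eps (i j k : Fin 3) : ℝ :=
  ((((j : ℤ) - (i : ℤ)) * ((k : ℤ) - (i : ℤ)) * ((k : ℤ) - (j : ℤ)) : ℤ) : ℝ) / 2

set_option linter.unusedSectionVars false

lemma eps_swap (i j k : Fin 3) : eps i k j = -eps i j k := by
  unfold eps; push_cast; ring

section aux
variable {A : Type*} [Ring A] [Algebra ℝ A]

lemma comm_single (ψ ψd : Fin 3 → ℤ → A)
    (hψψd : ∀ (i : Fin 3) (m : ℤ) (j : Fin 3) (n : ℤ),
      ψd i m * ψ j n + ψ j n * ψd i m = if i = j ∧ m + n + 1 = 0 then 1 else 0)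
    (a b j : Fin 3) (r s n : ℤ) :
    (ψ a r * ψ b s) * ψd j n - ψd j n * (ψ a r * ψ b s)
      = (if j = b ∧ n + s + 1 = 0 then ψ a r else 0)
        - (if j = a ∧ n + r + 1 = 0 then ψ b s else 0) := by
  have h1 : ψ a r * ψd j n = (if j = a ∧ n + r + 1 = 0 then 1 else 0) - ψd j n * ψ a r :=
    eq_sub_of_add_eq' (hψψd j n a r)
  have h2 : ψ b s * ψd j n = (if j = b ∧ n + s + 1 = 0 then 1 else 0) - ψd j n * ψ b s :=
    eq_sub_of_add_eq' (hψψd j n b s)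
  rw [mul_assoc, h2, mul_sub, ← mul_assoc, h1, sub_mul]
  simp only [mul_ite, ite_mul, mul_one, mul_zero, one_mul, zero_mul]
  noncomm_ring

lemma sum_comm_lemma (ψ ψd : Fin 3 → ℤ → A)
    (hψψd : ∀ (i : Fin 3) (m : ℤ) (j : Fin 3) (n : ℤ),
      ψd i m * ψ j n + ψ j n * ψd i m = if i = j ∧ m + n + 1 = 0 then 1 else 0)
    (i j : Fin 3) (c n : ℤ) (F : Finset ℤ) (h1 : c + n + 1 ∈ F) (h2 : -n - 1 ∈ F) :
    (∑ r ∈ F, ∑ a, ∑ b, algebraMap ℝ A (eps i a b) * (ψ a r * ψ b (c - r))) * ψd j n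
      - ψd j n * ∑ r ∈ F, ∑ a, ∑ b, algebraMap ℝ A (eps i a b) * (ψ a r * ψ b (c - r))
      = ∑ k, algebraMap ℝ A (-2 * eps i j k) * ψ k (c + n + 1) := by
  have key : ∀ r : ℤ,
      (∑ a, ∑ b, algebraMap ℝ A (eps i a b) * (ψ a r * ψ b (c - r))) * ψd j n
        - ψd j n * ∑ a, ∑ b, algebraMap ℝ A (eps i a b) * (ψ a r * ψ b (c - r))
      = ∑ a, ∑ b, algebraMap ℝ A (eps i a b) *
          ((if j = b ∧ n + (c - r) + 1 = 0 then ψ a r else 0)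
            - (if j = a ∧ n + r + 1 = 0 then ψ b (c - r) else 0)) := by
    intro r
    rw [Finset.sum_mul, Finset.mul_sum, ← Finset.sum_sub_distrib]
    refine Finset.sum_congr rfl fun a _ => ?_
    rw [Finset.sum_mul, Finset.mul_sum, ← Finset.sum_sub_distrib]
    refine Finset.sum_congr rfl fun b _ => ?_
    rw [← comm_single ψ ψd hψψd a b j r (c - r) n, mul_assoc, mul_sub]
    congr 1
    rw [← mul_assoc, ← Algebra.commutes, mul_assoc]
  rw [Finset.sum_mul, Finset.mul_sum, ← Finset.sum_sub_distrib,
    Finset.sum_congr rfl fun r _ => key r, Finset.sum_comm]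
  refine Eq.trans (Finset.sum_congr rfl fun a _ => Finset.sum_comm) ?_
  have hS1 : ∀ a b : Fin 3, (∑ r ∈ F, if j = b ∧ n + (c - r) + 1 = 0 then ψ a r else 0)
      = if j = b then ψ a (c + n + 1) else 0 := by
    intro a b
    by_cases hb : j = b
    · simp only [hb, true_and, if_pos rfl]
      simp only [show ∀ r : ℤ, (n + (c - r) + 1 = 0) ↔ r = c + n + 1 from fun r => by omega]
      rw [Finset.sum_ite_eq' F (c + n + 1) (fun r => ψ a r), if_pos h1, if_true]
    · simp [hb]
  have hS2 : ∀ a b : Fin 3, (∑ r ∈ F, if j = a ∧ n + r + 1 = 0 then ψ b (c - r) else 0)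
      = if j = a then ψ b (c + n + 1) else 0 := by
    intro a b
    by_cases ha : j = a
    · simp only [ha, true_and, if_pos rfl]
      simp only [show ∀ r : ℤ, (n + r + 1 = 0) ↔ r = -n - 1 from fun r => by omega]
      rw [Finset.sum_ite_eq' F (-n - 1) (fun r => ψ b (c - r)), if_pos h2,
        show c - (-n - 1) = c + n + 1 by ring, if_true]
    · simp [ha]
  have step : ∀ a : Fin 3, (∑ b, ∑ r ∈ F, algebraMap ℝ A (eps i a b) *
      ((if j = b ∧ n + (c - r) + 1 = 0 then ψ a r else 0)
        - (if j = a ∧ n + r + 1 = 0 then ψ b (c - r) else 0)))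
      = ∑ b, algebraMap ℝ A (eps i a b) *
          ((if j = b then ψ a (c + n + 1) else 0) - (if j = a then ψ b (c + n + 1) else 0)) := by
    intro a
    refine Finset.sum_congr rfl fun b _ => ?_
    rw [← Finset.mul_sum, Finset.sum_sub_distrib, hS1 a b, hS2 a b]
  rw [Finset.sum_congr rfl fun a _ => step a]
  simp only [mul_sub, mul_ite, mul_zero, Finset.sum_sub_distrib, Finset.sum_ite_eq,
    Finset.mem_univ, if_true, Finset.sum_ite_irrel, Finset.sum_const_zero]
  rw [← Finset.sum_sub_distrib]
  exact Finset.sum_congr rfl fun k _ => by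
    rw [eps_swap, show (-2 : ℝ) * eps i j k = -eps i j k - eps i j k from by ring, map_sub,
      sub_mul]

end aux

/-- In any associative algebra realizing the canonical (anti)commutation relations of
the quantized super-loop space (with `ħ` acting as `1`), the corrected bosonic modes
`x̃*_{i,m} = x*_{i,m} + (1/4m) ε_{ijk} Σ_n ψ^j_n ψ^k_{m-n}` and
`W̃*_i = W*_i - ¼ ε_{ijk} Σ_n ψ^j_n ψ^k_{-n}` super-commute with the fermionic
generators `ψ*_{j,n}`: the commutators of the normally-ordered partial sums with
`ψ*_{j,n}` stabilize to `0` once the (finitely many) contributing modes are included.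
Fermionic modes `ψ^i_r, ψ*_{i,r}` are indexed by `r ∈ ℤ` standing for `r + ½ ∈ ½+ℤ`. -/
theorem stmt_13 (A : Type*) [Ring A] [Algebra ℝ A]
    (ψ ψd Xd : Fin 3 → ℤ → A) (Wd : Fin 3 → A)
    (hψψd : ∀ (i : Fin 3) (m : ℤ) (j : Fin 3) (n : ℤ),
      ψd i m * ψ j n + ψ j n * ψd i m = if i = j ∧ m + n + 1 = 0 then 1 else 0)
    (hψψ : ∀ (i : Fin 3) (m : ℤ) (j : Fin 3) (n : ℤ),
      ψ i m * ψ j n + ψ j n * ψ i m = 0)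
    (hXdψd : ∀ (i : Fin 3) (m : ℤ) (j : Fin 3) (n : ℤ), m ≠ 0 →
      Xd i m * ψd j n - ψd j n * Xd i m
        = ∑ k, algebraMap ℝ A (eps i j k / (2 * (m : ℝ))) * ψ k (m + n))
    (hWdψd : ∀ (i j : Fin 3) (n : ℤ),
      Wd i * ψd j n - ψd j n * Wd i
        = ∑ k, algebraMap ℝ A (-(1 / 2) * eps i j k) * ψ k n) :
    (∀ (i j : Fin 3) (m n : ℤ), m ≠ 0 → ∃ F₀ : Finset ℤ, ∀ F : Finset ℤ, F₀ ⊆ F →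
      (Xd i m + algebraMap ℝ A (1 / (4 * (m : ℝ))) *
          ∑ r ∈ F, ∑ a, ∑ b, algebraMap ℝ A (eps i a b) * (ψ a r * ψ b (m - 1 - r))) * ψd j n
        - ψd j n * (Xd i m + algebraMap ℝ A (1 / (4 * (m : ℝ))) *
          ∑ r ∈ F, ∑ a, ∑ b, algebraMap ℝ A (eps i a b) * (ψ a r * ψ b (m - 1 - r))) = 0) ∧
    (∀ (i j : Fin 3) (n : ℤ), ∃ F₀ : Finset ℤ, ∀ F : Finset ℤ, F₀ ⊆ F →
      (Wd i - algebraMap ℝ A (1 / 4) *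
          ∑ r ∈ F, ∑ a, ∑ b, algebraMap ℝ A (eps i a b) * (ψ a r * ψ b (-1 - r))) * ψd j n
        - ψd j n * (Wd i - algebraMap ℝ A (1 / 4) *
          ∑ r ∈ F, ∑ a, ∑ b, algebraMap ℝ A (eps i a b) * (ψ a r * ψ b (-1 - r))) = 0) := by
  constructor
  · intro i j m n hm
    refine ⟨{m + n, -n - 1}, fun F hF => ?_⟩
    have hm' : (m : ℝ) ≠ 0 := Int.cast_ne_zero.mpr hm
    have h1 : m - 1 + n + 1 ∈ F := by
      rw [show m - 1 + n + 1 = m + n by ring]; exact hF (by simp)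
    have h2 : -n - 1 ∈ F := hF (by simp)
    have key := sum_comm_lemma ψ ψd hψψd i j (m - 1) n F h1 h2
    set S := ∑ r ∈ F, ∑ a, ∑ b, algebraMap ℝ A (eps i a b) * (ψ a r * ψ b (m - 1 - r)) with hS
    have expand : (Xd i m + algebraMap ℝ A (1 / (4 * (m : ℝ))) * S) * ψd j n
        - ψd j n * (Xd i m + algebraMap ℝ A (1 / (4 * (m : ℝ))) * S)
        = (Xd i m * ψd j n - ψd j n * Xd i m)
          + algebraMap ℝ A (1 / (4 * (m : ℝ))) * (S * ψd j n - ψd j n * S) := by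
      rw [add_mul, mul_add, mul_assoc, ← mul_assoc (ψd j n), ← Algebra.commutes, mul_assoc,
        mul_sub]
      abel
    rw [expand, hXdψd i m j n hm, key, show m - 1 + n + 1 = m + n by ring, Finset.mul_sum,
      ← Finset.sum_add_distrib]
    refine Finset.sum_eq_zero fun k _ => ?_
    rw [← mul_assoc, ← map_mul, ← add_mul, ← map_add]
    have hz : eps i j k / (2 * (m : ℝ)) + 1 / (4 * (m : ℝ)) * (-2 * eps i j k) = 0 := by
      field_simp; ring
    rw [hz, map_zero, zero_mul]
  · intro i j n
    refine ⟨{n, -n - 1}, fun F hF => ?_⟩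
    have h1 : (-1 : ℤ) + n + 1 ∈ F := by
      rw [show (-1 : ℤ) + n + 1 = n by ring]; exact hF (by simp)
    have h2 : -n - 1 ∈ F := hF (by simp)
    have key := sum_comm_lemma ψ ψd hψψd i j (-1) n F h1 h2
    set S := ∑ r ∈ F, ∑ a, ∑ b, algebraMap ℝ A (eps i a b) * (ψ a r * ψ b (-1 - r)) with hS
    have expand : (Wd i - algebraMap ℝ A (1 / 4) * S) * ψd j n
        - ψd j n * (Wd i - algebraMap ℝ A (1 / 4) * S)
        = (Wd i * ψd j n - ψd j n * Wd i)
          - algebraMap ℝ A (1 / 4) * (S * ψd j n - ψd j n * S) := by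
      rw [sub_mul, mul_sub, mul_assoc, ← mul_assoc (ψd j n), ← Algebra.commutes, mul_assoc,
        mul_sub]
      abel
    rw [expand, hWdψd i j n, key, show (-1 : ℤ) + n + 1 = n by ring, Finset.mul_sum,
      ← Finset.sum_sub_distrib]
    refine Finset.sum_eq_zero fun k _ => ?_
    rw [← mul_assoc, ← map_mul, ← sub_mul, ← map_sub]
    have hz : -(1 / 2) * eps i j k - 1 / 4 * (-2 * eps i j k) = 0 := by ring
    rw [hz, map_zero, zero_mul]
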